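/- arXiv:1710.11606 — 2 statements merged into one kernel-verified Lean document; each statement's English description precedes it below -/
import Mathlib

section
/- Let T ≥ 1 and x ∈ ℝ^T. If |x_i| < 1 for some i ≤ T, then there exists j ≤ i such that |x_j| < 1 and the partial derivative satisfies |∂f̄_T/∂x_j (x)| > 1; in particular ‖∇f̄_T(x)‖ > 1, where ‖·‖ is the Euclidean norm. -/
/-- Ψ(x) = 0 for x ≤ 1/2 and Ψ(x) = exp(1 − 1/(2x−1)²) for x > 1/2. -/
noncomputable def Psi (x : ℝ) : ℝ :=
  if x ≤ 1/2 then 0 else Real.exp (1 - 1/(2*x - 1)^2)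

/-- Φ(x) = √e · ∫_{−∞}^x exp(−t²/2) dt. -/
noncomputable def Phi (x : ℝ) : ℝ :=
  Real.sqrt (Real.exp 1) * ∫ t in Set.Iic x, Real.exp (-t^2/2)

/-- 0-based coordinates of `x : ℝ^T` extended by zero. -/
noncomputable def pad (T : ℕ) (x : Fin T → ℝ) (i : ℕ) : ℝ :=
  if h : i < T then x ⟨i, h⟩ else 0

/-- f̄_T(x) = −Ψ(1)Φ(x_1) + Σ_{i=2}^T [Ψ(−x_{i−1})Φ(−x_i) − Ψ(x_{i−1})Φ(x_i)]. -/
noncomputable def fbar (T : ℕ) (x : Fin T → ℝ) : ℝ :=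
  -(Psi 1 * Phi (pad T x 0)) +
    ∑ i ∈ Finset.Ico 1 T,
      (Psi (-(pad T x (i-1))) * Phi (-(pad T x i)) - Psi (pad T x (i-1)) * Phi (pad T x i))

/-- f̄_T viewed as a function on Euclidean space ℝ^T. -/
noncomputable def fbarE (T : ℕ) (x : EuclideanSpace ℝ (Fin T)) : ℝ :=
  fbar T (fun i => x i)

/-!
Let `j` be the first index with `|x_j| < 1`; with the convention `x_0 = 1`, the
preceding coordinate has `|x_{j-1}| ≥ 1`, so `Ψ(x_{j-1}) + Ψ(-x_{j-1}) ≥ 1`. The coordinate `x_j`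
enters `f̄_T` through two consecutive terms. Differentiating the later one in its first argument
gives something `≤ 0` (`Ψ` is nondecreasing, `Φ ≥ 0`), and differentiating the earlier one gives
`-(Ψ(x_{j-1}) + Ψ(-x_{j-1})) Φ'(x_j) ≤ -Φ'(x_j) = -√e·exp(-x_j²/2) < -1`.
The gradient norm dominates every partial derivative along a unit vector.
-/

open Real Finset Asymptotics

lemma differentiable_mul_abs : Differentiable ℝ fun t : ℝ => t * |t| := by
  intro a
  rcases eq_or_ne a 0 with rfl | ha
  · refine HasDerivAt.differentiableAt (f' := 0) ?_
    rw [hasDerivAt_iff_isLittleO_nhds_zero]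
    simp only [zero_add, abs_zero, mul_zero, sub_zero, smul_zero]
    have habs : Filter.Tendsto (fun h : ℝ => |h|) (nhds 0) (nhds 0) := by
      simpa using continuous_abs.tendsto (0 : ℝ)
    simpa using (isBigO_refl (fun h : ℝ => h) _).mul_isLittleO ((isLittleO_one_iff ℝ).2 habs)
  · exact differentiableAt_id.mul (differentiableAt_abs ha)

lemma psi_eq_exp_one_mul_expNegInvGlue (x : ℝ) :
    Psi x = exp 1 * expNegInvGlue ((2 * x - 1) * |2 * x - 1|) := by
  unfold Psi
  split_ifs with h
  · rw [expNegInvGlue.zero_of_nonpos (mul_nonpos_of_nonpos_of_nonneg (by linarith) (abs_nonneg _)),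
      mul_zero]
  · have hpos : 0 < 2 * x - 1 := by linarith
    rw [abs_of_pos hpos, expNegInvGlue, if_neg (not_le.2 (mul_pos hpos hpos)), ← exp_add]
    congr 1
    field_simp
    ring

@[fun_prop]
lemma differentiable_psi : Differentiable ℝ Psi := by
  rw [funext psi_eq_exp_one_mul_expNegInvGlue]
  exact ((expNegInvGlue.contDiff (n := 1)).differentiable one_ne_zero).comp
    (differentiable_mul_abs.comp (by fun_prop)) |>.const_mul _

lemma monotone_psi : Monotone Psi := by
  intro u v huv
  unfold Psi
  split_ifs with hu hv hv
  · exact le_rfl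
  · positivity
  · exact absurd (huv.trans hv) hu
  · push Not at hu
    gcongr
    · nlinarith
    · linarith

lemma psi_nonneg (x : ℝ) : 0 ≤ Psi x := by
  unfold Psi; split_ifs <;> positivity

lemma psi_one : Psi 1 = 1 := by
  norm_num [Psi]

lemma psi_neg_one : Psi (-1) = 0 := by
  norm_num [Psi]

lemma one_le_psi_add_psi_neg {u : ℝ} (hu : 1 ≤ |u|) : 1 ≤ Psi u + Psi (-u) := by
  rcases le_abs.1 hu with h | h
  · linarith [psi_one ▸ monotone_psi h, psi_nonneg (-u)]
  · linarith [psi_one ▸ monotone_psi h, psi_nonneg u]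

lemma integrable_exp_neg_sq_div_two : MeasureTheory.Integrable fun t : ℝ => exp (-t ^ 2 / 2) := by
  convert integrable_exp_neg_mul_sq (b := (1 / 2 : ℝ)) (by norm_num) using 2
  ring_nf

lemma hasDerivAt_phi (a : ℝ) : HasDerivAt Phi (√(exp 1) * exp (-a ^ 2 / 2)) a := by
  have hcont : Continuous fun t : ℝ => exp (-t ^ 2 / 2) := by fun_prop
  have hsplit : ∀ x, Phi x = √(exp 1) *
      ((∫ t in Set.Iic 0, exp (-t ^ 2 / 2)) + ∫ t in (0 : ℝ)..x, exp (-t ^ 2 / 2)) := by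
    intro x
    rw [Phi, ← intervalIntegral.integral_Iic_sub_Iic integrable_exp_neg_sq_div_two.integrableOn
      integrable_exp_neg_sq_div_two.integrableOn, add_sub_cancel]
  rw [funext hsplit]
  exact ((intervalIntegral.integral_hasDerivAt_right
    integrable_exp_neg_sq_div_two.intervalIntegrable (hcont.stronglyMeasurableAtFilter _ _)
    hcont.continuousAt).const_add _).const_mul _

@[fun_prop]
lemma differentiable_phi : Differentiable ℝ Phi :=
  fun a => (hasDerivAt_phi a).differentiableAt

lemma phi_nonneg (x : ℝ) : 0 ≤ Phi x :=
  mul_nonneg (sqrt_nonneg _) (MeasureTheory.integral_nonneg fun _ => (exp_pos _).le)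

lemma deriv_phi_neg (a : ℝ) : deriv Phi (-a) = deriv Phi a := by
  rw [(hasDerivAt_phi _).deriv, (hasDerivAt_phi _).deriv, neg_sq]

lemma one_lt_deriv_phi {a : ℝ} (ha : |a| < 1) : 1 < deriv Phi a := by
  rw [(hasDerivAt_phi a).deriv, ← exp_half, ← exp_add, one_lt_exp_iff]
  nlinarith [sq_abs a, abs_nonneg a]

noncomputable def chainTerm (u v : ℝ) : ℝ := Psi (-u) * Phi (-v) - Psi u * Phi v

noncomputable def chainTermDerivLeft (u v : ℝ) : ℝ :=
  -(deriv Psi (-u) * Phi (-v) + deriv Psi u * Phi v)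

noncomputable def chainTermDerivRight (u v : ℝ) : ℝ := -((Psi (-u) + Psi u) * deriv Phi v)

lemma HasDerivAt.chainTerm {U V : ℝ → ℝ} {a b t : ℝ} (hU : HasDerivAt U a t)
    (hV : HasDerivAt V b t) :
    HasDerivAt (fun s => chainTerm (U s) (V s))
      (a * chainTermDerivLeft (U t) (V t) + b * chainTermDerivRight (U t) (V t)) t := by
  have hPsi := fun w => (differentiable_psi w).hasDerivAt
  have hPhi := fun w => (differentiable_phi w).hasDerivAt
  refine ((((hPsi _).comp t hU.fun_neg).fun_mul ((hPhi _).comp t hV.fun_neg)).fun_sub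
    (((hPsi _).comp t hU).fun_mul ((hPhi _).comp t hV))).congr_deriv ?_
  simp only [chainTermDerivLeft, chainTermDerivRight, deriv_phi_neg, Function.comp_apply]
  ring

lemma chainTermDerivLeft_nonpos (u v : ℝ) : chainTermDerivLeft u v ≤ 0 := by
  have := monotone_psi.deriv_nonneg (x := u)
  have := monotone_psi.deriv_nonneg (x := -u)
  have := phi_nonneg v
  have := phi_nonneg (-v)
  rw [chainTermDerivLeft, neg_nonpos]
  positivity

lemma chainTermDerivRight_lt {u v : ℝ} (hu : 1 ≤ |u|) (hv : |v| < 1) :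
    chainTermDerivRight u v < -1 := by
  have hΨ := one_le_psi_add_psi_neg hu
  have hΦ := one_lt_deriv_phi hv
  rw [chainTermDerivRight, add_comm (Psi (-u))]
  nlinarith

noncomputable def chainSum (n : ℕ) (y : ℕ → ℝ) : ℝ := ∑ k ∈ range n, chainTerm (y k) (y (k + 1))

lemma hasLineDerivAt_chainSum_single (n m : ℕ) (y : ℕ → ℝ) :
    HasLineDerivAt ℝ (chainSum n)
      (∑ k ∈ range n, ((Pi.single m 1 : ℕ → ℝ) k * chainTermDerivLeft (y k) (y (k + 1)) +
        (Pi.single m 1 : ℕ → ℝ) (k + 1) * chainTermDerivRight (y k) (y (k + 1))))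
      y (Pi.single m 1) := by
  have hcoord : ∀ l, HasDerivAt (fun s : ℝ => (y + s • Pi.single m 1 : ℕ → ℝ) l)
      ((Pi.single m 1 : ℕ → ℝ) l) 0 := by
    intro l
    simpa using ((hasDerivAt_id (0 : ℝ)).mul_const ((Pi.single m 1 : ℕ → ℝ) l)).const_add (y l)
  have h := HasDerivAt.fun_sum (u := range n) fun k _ => (hcoord k).chainTerm (hcoord (k + 1))
  simp only [zero_smul, add_zero] at h
  exact h

lemma lineDeriv_chainSum_single_lt {n j : ℕ} (hj : j < n) {y : ℕ → ℝ} (hy : 1 ≤ |y j|)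
    (hy' : |y (j + 1)| < 1) : lineDeriv ℝ (chainSum n) y (Pi.single (j + 1) 1) < -1 := by
  rw [(hasLineDerivAt_chainSum_single n (j + 1) y).lineDeriv]
  calc _ ≤ ∑ k ∈ range n,
        (Pi.single (j + 1) 1 : ℕ → ℝ) (k + 1) * chainTermDerivRight (y k) (y (k + 1)) := by
        gcongr with k
        have : 0 ≤ (Pi.single (j + 1) 1 : ℕ → ℝ) k := by
          rw [Pi.single_apply]; split_ifs <;> norm_num
        nlinarith [chainTermDerivLeft_nonpos (y k) (y (k + 1))]
    _ = chainTermDerivRight (y j) (y (j + 1)) := by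
        simp [Pi.single_apply, hj]
    _ < -1 := chainTermDerivRight_lt hy hy'

-- The leading term `−Ψ(1)Φ(x_1)` of `f̄_T` is the chain term with a virtual `x_0 = 1`,
-- since `Ψ(−1) = 0`.
noncomputable def chainSeq (T : ℕ) (x : Fin T → ℝ) : ℕ → ℝ
  | 0 => 1
  | m + 1 => pad T x m

lemma pad_fin {T : ℕ} (x : Fin T → ℝ) (j : Fin T) : pad T x j = x j := by
  simp [pad]

lemma fbar_eq_chainSum {T : ℕ} (hT : 0 < T) (x : Fin T → ℝ) :
    fbar T x = chainSum T (chainSeq T x) := by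
  obtain ⟨n, rfl⟩ := Nat.exists_eq_add_one_of_ne_zero hT.ne'
  rw [fbar, chainSum, sum_range_succ', sum_Ico_eq_sum_range, add_tsub_cancel_right, add_comm]
  congr 1
  · refine sum_congr rfl fun k _ => ?_
    simp [chainTerm, chainSeq, add_comm 1 k]
  · simp [chainTerm, chainSeq, psi_one, psi_neg_one]

lemma chainSeq_add_smul_single {T : ℕ} (x : Fin T → ℝ) (j : Fin T) (s : ℝ) :
    chainSeq T (x + s • Pi.single j 1) = chainSeq T x + s • Pi.single (j + 1 : ℕ) 1 := by
  funext m
  rcases m with _ | m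
  · simp [chainSeq]
  · by_cases hm : m < T
    · simp [chainSeq, pad, hm, Pi.single_apply, Fin.ext_iff]
    · have : m ≠ j := fun h => hm (h ▸ j.isLt)
      simp [chainSeq, pad, hm, this]

lemma one_le_abs_chainSeq {T : ℕ} {x : Fin T → ℝ} {j : Fin T} (hmin : ∀ k < j, 1 ≤ |x k|) :
    1 ≤ |chainSeq T x j| := by
  rcases j with ⟨_ | k, hk⟩
  · simp [chainSeq]
  · simpa [chainSeq, pad, show k < T by omega] using hmin ⟨k, by omega⟩ (by simp [Fin.lt_def])

lemma differentiable_pad (T m : ℕ) :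
    Differentiable ℝ fun x : EuclideanSpace ℝ (Fin T) => pad T (fun i => x i) m := by
  unfold pad
  split_ifs with h
  · exact (EuclideanSpace.proj (𝕜 := ℝ) (⟨m, h⟩ : Fin T)).differentiable
  · exact differentiable_const 0

lemma differentiable_fbarE (T : ℕ) : Differentiable ℝ (fbarE T) := by
  have := differentiable_pad T
  unfold fbarE fbar
  fun_prop

lemma fderiv_fbarE_single {T : ℕ} (x : EuclideanSpace ℝ (Fin T)) (j : Fin T) :
    fderiv ℝ (fbarE T) x (EuclideanSpace.single j 1) =
      lineDeriv ℝ (chainSum T) (chainSeq T fun i => x i) (Pi.single (j + 1 : ℕ) 1) := by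
  rw [← (differentiable_fbarE T x).lineDeriv_eq_fderiv]
  unfold lineDeriv
  congr 1
  funext s
  have hcoord : (fun i => (x + s • EuclideanSpace.single j 1 : EuclideanSpace ℝ (Fin T)) i) =
      (fun i => x i) + s • Pi.single j 1 := by
    funext i
    simp [Pi.single_apply]
  rw [fbarE, hcoord, fbar_eq_chainSum j.pos, chainSeq_add_smul_single]

lemma abs_fderiv_apply_le_norm_gradient {F : Type*} [NormedAddCommGroup F]
    [InnerProductSpace ℝ F] [CompleteSpace F] (f : F → ℝ) (x v : F) :
    |fderiv ℝ f x v| ≤ ‖gradient f x‖ * ‖v‖ := by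
  rw [← inner_gradient_left]
  exact abs_real_inner_le_norm _ _

theorem stmt9_general (T : ℕ) (x : EuclideanSpace ℝ (Fin T)) (i : Fin T)
    (hi : |x i| < 1) :
    (∃ j : Fin T, (j : ℕ) ≤ (i : ℕ) ∧ |x j| < 1 ∧
      1 < |fderiv ℝ (fbarE T) x (EuclideanSpace.single j 1)|) ∧
    1 < ‖gradient (fbarE T) x‖ := by
  obtain ⟨j, hjx, hmin⟩ := wellFounded_lt.has_min {k : Fin T | |x k| < 1} ⟨i, hi⟩
  have hpartial : fderiv ℝ (fbarE T) x (EuclideanSpace.single j 1) < -1 := by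
    rw [fderiv_fbarE_single]
    refine lineDeriv_chainSum_single_lt j.isLt (one_le_abs_chainSeq fun k hk => ?_) ?_
    · exact not_lt.1 fun h => hmin k h hk
    · simpa [chainSeq, pad_fin] using hjx
  have habs : 1 < |fderiv ℝ (fbarE T) x (EuclideanSpace.single j 1)| :=
    lt_abs.2 (Or.inr (by linarith))
  refine ⟨⟨j, not_lt.1 (hmin i hi), hjx, habs⟩, habs.trans_le ?_⟩
  simpa using abs_fderiv_apply_le_norm_gradient (fbarE T) x (EuclideanSpace.single j 1)

/-- If `|x_i| < 1` for some coordinate `i`, then there is `j ≤ i` with `|x_j| < 1` and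
`|∂f̄_T/∂x_j(x)| > 1`; in particular `‖∇f̄_T(x)‖ > 1`. -/
theorem stmt9 (T : ℕ) (hT : 1 ≤ T) (x : EuclideanSpace ℝ (Fin T)) (i : Fin T)
    (hi : |x i| < 1) :
    (∃ j : Fin T, (j : ℕ) ≤ (i : ℕ) ∧ |x j| < 1 ∧
      1 < |fderiv ℝ (fbarE T) x (EuclideanSpace.single j 1)|) ∧
    1 < ‖gradient (fbarE T) x‖ :=
  stmt9_general T x i hi
end

section
/- Let T ≥ 1, d ≥ T, and let U ∈ ℝ^{d×T} satisfy UᵀU = I_T. Set R = 230√T, ρ(x) = x/√(1 + ‖x‖²/R²), and f̂(x) = f̄_T(Uᵀρ(x)) + ‖x‖²/10. Then f̂(0) − f̂(x) ≤ 12T for every x ∈ ℝ^d; in particular f̂(0) − inf_x f̂(x) ≤ 12T. -/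
/-- The linear map `x ↦ Uᵀx : ℝ^d → ℝ^T`. -/
noncomputable def Umap {d T : ℕ} (U : Matrix (Fin d) (Fin T) ℝ)
    (x : EuclideanSpace ℝ (Fin d)) : EuclideanSpace ℝ (Fin T) :=
  WithLp.toLp 2 (fun j => ∑ i, U i j * x i)

/-- The `j`-th column `u^{(j)}` of `U`. -/
noncomputable def col {d T : ℕ} (U : Matrix (Fin d) (Fin T) ℝ) (j : Fin T) :
    EuclideanSpace ℝ (Fin d) :=
  WithLp.toLp 2 (fun i => U i j)

/-- The soft projection ρ(x) = x/√(1 + ‖x‖²/R²). -/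
noncomputable def rho {d : ℕ} (R : ℝ) (x : EuclideanSpace ℝ (Fin d)) :
    EuclideanSpace ℝ (Fin d) :=
  (Real.sqrt (1 + ‖x‖^2 / R^2))⁻¹ • x

/-- f̂(x) = f̄_T(Uᵀρ(x)) + ‖x‖²/10, with R = 230√T. -/
noncomputable def fhat {d T : ℕ} (U : Matrix (Fin d) (Fin T) ℝ)
    (x : EuclideanSpace ℝ (Fin d)) : ℝ :=
  fbar T (fun j => Umap U (rho (230 * Real.sqrt T) x) j) + ‖x‖^2 / 10

lemma Psi_nonneg (a : ℝ) : 0 ≤ Psi a := by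
  unfold Psi
  split_ifs
  exacts [le_rfl, (Real.exp_pos _).le]

lemma Psi_le_exp_one (a : ℝ) : Psi a ≤ Real.exp 1 := by
  unfold Psi
  split_ifs
  · positivity
  · gcongr
    linarith [show 0 ≤ 1 / (2 * a - 1) ^ 2 by positivity]

lemma Psi_zero : Psi 0 = 0 := by
  norm_num [Psi]

lemma Phi_nonneg (a : ℝ) : 0 ≤ Phi a :=
  mul_nonneg (Real.sqrt_nonneg _)
    (MeasureTheory.setIntegral_nonneg measurableSet_Iic fun _ _ => (Real.exp_pos _).le)

lemma Phi_le (a : ℝ) : Phi a ≤ Real.sqrt (Real.exp 1) * Real.sqrt (2 * Real.pi) := by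
  have gauss : (fun t : ℝ => Real.exp (-t ^ 2 / 2)) = fun t => Real.exp (-(1 / 2) * t ^ 2) := by
    funext t; ring_nf
  have integrable : MeasureTheory.Integrable (fun t : ℝ => Real.exp (-t ^ 2 / 2)) := by
    rw [gauss]; exact integrable_exp_neg_mul_sq (by norm_num)
  unfold Phi
  gcongr
  calc ∫ t in Set.Iic a, Real.exp (-t ^ 2 / 2)
      ≤ ∫ t, Real.exp (-t ^ 2 / 2) :=
        MeasureTheory.setIntegral_le_integral integrable
          (Filter.Eventually.of_forall fun _ => (Real.exp_pos _).le)
    _ = Real.sqrt (2 * Real.pi) := by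
        rw [gauss, integral_gaussian]
        ring_nf

lemma Psi_mul_Phi_le_twelve (a b : ℝ) : Psi a * Phi b ≤ 12 := by
  set s := Real.sqrt (Real.exp 1)
  set t := Real.sqrt (2 * Real.pi)
  have he : Real.exp 1 ≤ 2.7182818286 := Real.exp_one_lt_d9.le
  have hs : s ≤ 1.649 := by
    rw [Real.sqrt_le_left (by norm_num)]; linarith
  have ht : t ≤ 2.51 := by
    rw [Real.sqrt_le_left (by norm_num)]; linarith [Real.pi_lt_d2]
  calc Psi a * Phi b ≤ Real.exp 1 * (s * t) :=
        mul_le_mul (Psi_le_exp_one a) (Phi_le b) (Phi_nonneg b) (Real.exp_pos 1).le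
    _ ≤ 2.7182818286 * (1.649 * 2.51) := by gcongr
    _ ≤ 12 := by norm_num

lemma pad_zero (T i : ℕ) : pad T 0 i = 0 := by
  unfold pad
  split_ifs <;> rfl

lemma fbar_zero (T : ℕ) : fbar T 0 = -(Psi 1 * Phi 0) := by
  simp [fbar, pad_zero, Psi_zero]

lemma neg_twelve_mul_le_fbar {T : ℕ} (hT : 1 ≤ T) (y : Fin T → ℝ) : -(12 * T : ℝ) ≤ fbar T y := by
  have summand (a b : ℝ) : -12 ≤ Psi (-a) * Phi (-b) - Psi a * Phi b := by
    linarith [Psi_mul_Phi_le_twelve a b, mul_nonneg (Psi_nonneg (-a)) (Phi_nonneg (-b))]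
  have sum_ge : ∑ _ ∈ Finset.Ico 1 T, (-12 : ℝ) ≤ ∑ i ∈ Finset.Ico 1 T,
      (Psi (-(pad T y (i - 1))) * Phi (-(pad T y i)) - Psi (pad T y (i - 1)) * Phi (pad T y i)) :=
    Finset.sum_le_sum fun i _ => summand _ _
  rw [Finset.sum_const, Nat.card_Ico, nsmul_eq_mul, Nat.cast_sub hT, Nat.cast_one] at sum_ge
  unfold fbar
  linarith [Psi_mul_Phi_le_twelve 1 (pad T y 0)]

lemma fbar_zero_sub_le (T : ℕ) (y : Fin T → ℝ) : fbar T 0 - fbar T y ≤ 12 * T := by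
  rcases Nat.eq_zero_or_pos T with rfl | hT
  · simp [fbar, pad]
  · linarith [neg_twelve_mul_le_fbar hT y, fbar_zero T, mul_nonneg (Psi_nonneg 1) (Phi_nonneg 0)]

lemma fhat_zero {d T : ℕ} (U : Matrix (Fin d) (Fin T) ℝ) : fhat U 0 = fbar T 0 := by
  simp [fhat, Umap, rho, Pi.zero_def]

theorem stmt16_general (T d : ℕ)
    (U : Matrix (Fin d) (Fin T) ℝ)
    (x : EuclideanSpace ℝ (Fin d)) :
    fhat U 0 - fhat U x ≤ 12 * T := by
  calc fhat U 0 - fhat U x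
      = fbar T 0 - fbar T (fun j => Umap U (rho (230 * Real.sqrt T) x) j) - ‖x‖ ^ 2 / 10 := by
        rw [fhat_zero, fhat]; ring
    _ ≤ fbar T 0 - fbar T (fun j => Umap U (rho (230 * Real.sqrt T) x) j) := by
        linarith [show 0 ≤ ‖x‖ ^ 2 / 10 by positivity]
    _ ≤ 12 * T := fbar_zero_sub_le T _

/-- If `UᵀU = I_T` then f̂(0) − f̂(x) ≤ 12T for every x (in particular
f̂(0) − inf f̂ ≤ 12T). -/
theorem stmt16 (T d : ℕ) (hT : 1 ≤ T) (hd : T ≤ d)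
    (U : Matrix (Fin d) (Fin T) ℝ) (hU : U.transpose * U = 1)
    (x : EuclideanSpace ℝ (Fin d)) :
    fhat U 0 - fhat U x ≤ 12 * T :=
  stmt16_general T d U x
end
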